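/- arXiv:1611.10034 — 2 statements merged into one kernel-verified Lean document; each statement's English description precedes it below -/
import Mathlib

section
/- Let K : Ω × Ω → ℝ be a strictly positive definite kernel, x_1,…,x_N ∈ Ω pairwise distinct, and a ∈ ℝ. Let c ∈ ℝ^N solve ∑_i c_i K(x_j, x_i) = a for all j, and d ∈ ℝ^N solve ∑_i d_i K(x_j, x_i) = 1 for all j. Then for every x ∈ Ω with ∑_i d_i K(x, x_i) ≠ 0, the rescaled interpolant satisfies (∑_i c_i K(x, x_i)) / (∑_i d_i K(x, x_i)) = a; i.e., the rescaled interpolation method reproduces constant functions exactly. -/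
/-- A kernel `K : Ω × Ω → ℝ` is strictly positive definite if it is symmetric and
for every `N` and every tuple of pairwise distinct points `x : Fin N → Ω` the
Gram matrix `(K (x i) (x j))` is positive definite. -/
def IsStrictlyPosDefKernel {Ω : Type*} (K : Ω → Ω → ℝ) : Prop :=
  (∀ x y : Ω, K x y = K y x) ∧
  ∀ (N : ℕ) (x : Fin N → Ω), Function.Injective x →
    (Matrix.of fun i j : Fin N => K (x i) (x j)).PosDef

/-- the rescaled interpolation method reproduces constant
functions exactly: if `c` solves the Gram system with data `a` and `d` solves it
with data `1`, then the quotient equals `a` wherever the denominator is nonzero. -/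
theorem rescaled_interpolant_reproduces_constants {Ω : Type*} (K : Ω → Ω → ℝ)
    (hK : IsStrictlyPosDefKernel K) (N : ℕ) (x : Fin N → Ω)
    (hx : Function.Injective x) (a : ℝ) (c d : Fin N → ℝ)
    (hc : ∀ j : Fin N, ∑ i : Fin N, c i * K (x j) (x i) = a)
    (hd : ∀ j : Fin N, ∑ i : Fin N, d i * K (x j) (x i) = 1) :
    ∀ t : Ω, (∑ i : Fin N, d i * K t (x i)) ≠ 0 →
      (∑ i : Fin N, c i * K t (x i)) / (∑ i : Fin N, d i * K t (x i)) = a := by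
  intro t ht
  set G : Matrix (Fin N) (Fin N) ℝ := Matrix.of fun i j : Fin N => K (x i) (x j) with hG
  have hpd : G.PosDef := hK.2 N x hx
  have hinv : IsUnit G.det := isUnit_iff_ne_zero.mpr (ne_of_gt hpd.det_pos)
  have hmv : G.mulVec c = G.mulVec (a • d) := by
    funext j
    simp only [Matrix.mulVec, dotProduct, hG, Matrix.of_apply, Pi.smul_apply,
      smul_eq_mul]
    calc ∑ i, K (x j) (x i) * c i = ∑ i, c i * K (x j) (x i) := by
          simp [mul_comm]
      _ = a := hc j
      _ = a * ∑ i, d i * K (x j) (x i) := by rw [hd j]; ring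
      _ = ∑ i, K (x j) (x i) * (a * d i) := by
          rw [Finset.mul_sum]; exact Finset.sum_congr rfl fun i _ => by ring
  have hcd : c = a • d := by
    have := Matrix.mulVec_injective_iff_isUnit.mpr ((Matrix.isUnit_iff_isUnit_det G).mpr hinv)
    exact this hmv
  have : (∑ i : Fin N, c i * K t (x i)) = a * ∑ i : Fin N, d i * K t (x i) := by
    rw [hcd, Finset.mul_sum]
    simp [mul_assoc]
  rw [this, mul_div_assoc, div_self ht, mul_one]
end

section
/- Let K : Ω × Ω → ℝ be a strictly positive definite kernel, x_1,…,x_N ∈ Ω pairwise distinct, u_1,…,u_N the cardinal basis, and f : Ω → ℝ. Let c ∈ ℝ^N solve ∑_i c_i K(x_j, x_i) = f(x_j) for all j and d ∈ ℝ^N solve ∑_i d_i K(x_j, x_i) = 1 for all j. Then for every x ∈ Ω with ∑_{k=1}^N u_k(x) ≠ 0, the rescaled interpolant admits the Shepard form (∑_i c_i K(x, x_i)) / (∑_i d_i K(x, x_i)) = ∑_{j=1}^N f(x_j) · u_j(x)/∑_{k=1}^N u_k(x); i.e., the rescaled interpolation method is a Shepard method with weights û_j = u_j / ∑_k u_k.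 -/
/-- the rescaled interpolant is a Shepard method with weights
`û j = u j / ∑ k, u k`: wherever `∑ k, u k (x) ≠ 0`,
`P̂_f(x) = ∑ j, f (x j) * û j x`. -/
theorem rescaled_interpolant_is_shepard {Ω : Type*} (K : Ω → Ω → ℝ)
    (hK : IsStrictlyPosDefKernel K) (N : ℕ) (x : Fin N → Ω)
    (hx : Function.Injective x) (u : Fin N → Ω → ℝ)
    (hu_span : ∀ j : Fin N,
      u j ∈ Submodule.span ℝ (Set.range fun i : Fin N => fun t : Ω => K t (x i)))
    (hu_card : ∀ i j : Fin N, u j (x i) = if i = j then 1 else 0)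
    (f : Ω → ℝ) (c d : Fin N → ℝ)
    (hc : ∀ j : Fin N, ∑ i : Fin N, c i * K (x j) (x i) = f (x j))
    (hd : ∀ j : Fin N, ∑ i : Fin N, d i * K (x j) (x i) = 1) :
    ∀ t : Ω, (∑ k : Fin N, u k t) ≠ 0 →
      (∑ i : Fin N, c i * K t (x i)) / (∑ i : Fin N, d i * K t (x i))
        = ∑ j : Fin N, f (x j) * (u j t / ∑ k : Fin N, u k t) := by
  classical
  obtain ⟨hsym, hpd⟩ := hK
  set G : Matrix (Fin N) (Fin N) ℝ := Matrix.of fun i j : Fin N => K (x i) (x j) with hGdef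
  have hG : G.PosDef := hpd N x hx
  have hdet : IsUnit G.det := isUnit_iff_ne_zero.mpr hG.det_pos.ne'
  have hinj : ∀ v w : Fin N → ℝ, G.mulVec v = G.mulVec w → v = w := by
    intro v w h
    have h2 := congrArg (G⁻¹.mulVec) h
    simpa [Matrix.mulVec_mulVec, Matrix.nonsing_inv_mul G hdet] using h2
  choose a ha using fun j => (Submodule.mem_span_range_iff_exists_fun ℝ).mp (hu_span j)
  -- pointwise form of ha
  have hau : ∀ (j : Fin N) (t : Ω), u j t = ∑ i : Fin N, a j i * K t (x i) := by
    intro j t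
    have := congrFun (ha j) t
    simpa [Finset.sum_apply] using this.symm
  -- general coefficient-uniqueness: coefficients of interpolant are determined
  have key : ∀ (e : Fin N → ℝ) (φ : Fin N → ℝ),
      (∀ m : Fin N, ∑ i : Fin N, e i * K (x m) (x i) = φ m) →
      ∀ t : Ω, ∑ i : Fin N, e i * K t (x i) = ∑ j : Fin N, φ j * u j t := by
    intro e φ he t
    have hcoef : e = fun i => ∑ j : Fin N, φ j * a j i := by
      apply hinj
      funext m
      have h1 : G.mulVec e m = φ m := by
        simpa [Matrix.mulVec, dotProduct, mul_comm, hGdef] using he m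
      have h2 : G.mulVec (fun i => ∑ j : Fin N, φ j * a j i) m = φ m := by
        simp only [Matrix.mulVec, dotProduct, hGdef, Matrix.of_apply]
        have key2 : ∀ j : Fin N, ∑ i : Fin N, K (x m) (x i) * (φ j * a j i)
            = φ j * (if m = j then 1 else 0) := by
          intro j
          have hh := (hau j (x m)).symm
          rw [hu_card m j] at hh
          calc ∑ i : Fin N, K (x m) (x i) * (φ j * a j i)
              = φ j * ∑ i : Fin N, a j i * K (x m) (x i) := by
                rw [Finset.mul_sum]; apply Finset.sum_congr rfl; intro i _; ring
            _ = φ j * (if m = j then 1 else 0) := by rw [hh]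
        calc ∑ i : Fin N, K (x m) (x i) * ∑ j : Fin N, φ j * a j i
            = ∑ i : Fin N, ∑ j : Fin N, K (x m) (x i) * (φ j * a j i) := by
              simp [Finset.mul_sum]
          _ = ∑ j : Fin N, ∑ i : Fin N, K (x m) (x i) * (φ j * a j i) :=
              Finset.sum_comm
          _ = φ m := by simp [key2]
      rw [h1, h2]
    rw [hcoef]
    calc ∑ i : Fin N, (∑ j : Fin N, φ j * a j i) * K t (x i)
        = ∑ j : Fin N, ∑ i : Fin N, φ j * a j i * K t (x i) := by
          rw [Finset.sum_comm]
          exact Finset.sum_congr rfl fun i _ => by rw [Finset.sum_mul]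
      _ = ∑ j : Fin N, φ j * u j t := by
          apply Finset.sum_congr rfl; intro j _
          rw [hau j t, Finset.mul_sum]
          exact Finset.sum_congr rfl fun i _ => by ring
  intro t ht
  have hnum := key c (fun j => f (x j)) hc t
  have hden := key d (fun _ => 1) hd t
  rw [hnum, hden]
  simp only [one_mul]
  rw [Finset.sum_div]
  exact Finset.sum_congr rfl fun j _ => by rw [mul_div_assoc]
end
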